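/- In the setting above, for any v ∈ ℝ^n with v^T Y = 0, one has ⟨u, v⟩ = ‖Bu‖² · v[A]^T (I_{|A|} − Y_⋆ D Y_⋆^T) e_p[A]. -/

import Mathlib

/-!
Let `G = BᵀB = I + YYᵀ`. The orthogonality conditions say `(Gu)ᵢ = 0` for `i ∈ A \ {p}`, and since
`u` is supported on `A` they read `(I + Y⋆Y⋆ᵀ) u[A] = t • eₚ[A]` with `t = (Gu)ₚ`. Because `uₚ = 1`,
`t = uᵀGu = ‖Bu‖²`. The Woodbury identity `(I + Y⋆Y⋆ᵀ)⁻¹ = I - Y⋆DY⋆ᵀ` then gives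
`u[A] = ‖Bu‖² • (I - Y⋆DY⋆ᵀ) eₚ[A]`, and `⟨u, v⟩ = ⟨u[A], v[A]⟩`.
-/

open Matrix

theorem Pi.eq_smul_single_one_of_forall_ne {ι R : Type*} [DecidableEq ι] [MulZeroOneClass R]
    {f : ι → R} {i : ι} (h : ∀ j ≠ i, f j = 0) : f = f i • Pi.single i 1 := by
  funext j
  by_cases hj : j = i
  · subst hj; simp
  · simp [Pi.single_eq_of_ne hj, h j hj]

namespace Matrix

section Gram

variable {l n R : Type*} [Fintype l] [Fintype n] [CommSemiring R]

theorem col_dotProduct_mulVec (B : Matrix l n R) (u : n → R) (i : n) :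
    (fun k => B k i) ⬝ᵥ (B *ᵥ u) = ((Bᵀ * B) *ᵥ u) i := by
  rw [← mulVec_mulVec]; rfl

theorem mulVec_dotProduct_mulVec_self (B : Matrix l n R) (u : n → R) :
    (B *ᵥ u) ⬝ᵥ (B *ᵥ u) = u ⬝ᵥ ((Bᵀ * B) *ᵥ u) := by
  rw [dotProduct_mulVec, dotProduct_comm, ← mulVec_transpose, ← mulVec_mulVec]

theorem transpose_fromRows_one_mul_self [DecidableEq n] {d : Type*} [Fintype d]
    (Y : Matrix n d R) :
    (fromRows (1 : Matrix n n R) Yᵀ)ᵀ * fromRows (1 : Matrix n n R) Yᵀ = 1 + Y * Yᵀ := by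
  rw [transpose_fromRows, fromCols_mul_fromRows, transpose_one, one_mul, transpose_transpose]

end Gram

section Restriction

variable {n R : Type*} [Fintype n] [CommSemiring R] (A : Finset n) {u : n → R}

theorem dotProduct_eq_dotProduct_subtype (hu : ∀ i, i ∉ A → u i = 0) (v : n → R) :
    u ⬝ᵥ v = (fun i : {i // i ∈ A} => u i) ⬝ᵥ fun i => v i := by
  rw [dotProduct, dotProduct, Finset.sum_coe_sort A fun i => u i * v i]
  exact (Finset.sum_subset A.subset_univ fun i _ hi => by rw [hu i hi, zero_mul]).symm

theorem mulVec_apply_eq_submatrix_mulVec (hu : ∀ i, i ∉ A → u i = 0) (M : Matrix n n R)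
    (i : {i // i ∈ A}) :
    (M *ᵥ u) i = (M.submatrix (↑) (↑) *ᵥ fun j : {j // j ∈ A} => u j) i := by
  rw [mulVec, dotProduct_comm, dotProduct_eq_dotProduct_subtype A hu, dotProduct_comm]; rfl

end Restriction

theorem submatrix_one_add_mul_transpose_self {l n d R : Type*} [Fintype d] [DecidableEq l]
    [DecidableEq n] [CommSemiring R] (Y : Matrix n d R) {f : l → n} (hf : Function.Injective f) :
    (1 + Y * Yᵀ).submatrix f f = 1 + Y.submatrix f id * (Y.submatrix f id)ᵀ := by
  rw [show (1 + Y * Yᵀ : Matrix n n R).submatrix f f = (1 : Matrix n n R).submatrix f f +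
    (Y * Yᵀ).submatrix f f from rfl, submatrix_one _ hf, transpose_submatrix,
    submatrix_mul _ _ _ _ _ Function.bijective_id]

variable {m k : Type*} [Fintype m] [Fintype k] [DecidableEq k]

theorem isUnit_one_add_transpose_mul_self (X : Matrix m k ℝ) : IsUnit (1 + Xᵀ * X) := by
  refine (PosDef.one.add_posSemidef ?_).isUnit
  simpa using posSemidef_conjTranspose_mul_self X

theorem inv_one_add_mul_transpose_self [DecidableEq m] (X : Matrix m k ℝ) :
    (1 + X * Xᵀ)⁻¹ = 1 - X * (1 + Xᵀ * X)⁻¹ * Xᵀ := by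
  simpa using add_mul_mul_inv_eq_sub 1 X 1 Xᵀ isUnit_one isUnit_one
    (by simpa using isUnit_one_add_transpose_mul_self X)

end Matrix

theorem gsw_inner_product_formula_general (n d : ℕ) (Y : Matrix (Fin n) (Fin d) ℝ)
    (B : Matrix (Fin n ⊕ Fin d) (Fin n) ℝ) (hB : B = Matrix.fromRows 1 Yᵀ)
    (A : Finset (Fin n)) (p : Fin n) (hp : p ∈ A)
    (Yst : Matrix {i // i ∈ A} (Fin d) ℝ) (hYst : Yst = Matrix.of fun i j => Y i.1 j)
    (D : Matrix (Fin d) (Fin d) ℝ) (hD : D = (1 + Ystᵀ * Yst)⁻¹)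
    (u : Fin n → ℝ) (hu0 : ∀ i, i ∉ A → u i = 0) (hup : u p = 1)
    (huo : ∀ i ∈ A, i ≠ p → (fun k => B k i) ⬝ᵥ (B *ᵥ u) = 0)
    (v : Fin n → ℝ) :
    u ⬝ᵥ v = ((B *ᵥ u) ⬝ᵥ (B *ᵥ u)) *
      ((fun i : {i // i ∈ A} => v i.1) ⬝ᵥ
        (((1 : Matrix {i // i ∈ A} {i // i ∈ A} ℝ) - Yst * D * Ystᵀ) *ᵥ
          fun i : {i // i ∈ A} => if i.1 = p then (1 : ℝ) else 0)) := by
  subst hD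
  set P : {i // i ∈ A} := ⟨p, hp⟩
  set uA : {i // i ∈ A} → ℝ := fun i => u i
  set g := (1 + Yst * Ystᵀ) *ᵥ uA
  have hGram : Bᵀ * B = 1 + Y * Yᵀ := hB ▸ transpose_fromRows_one_mul_self Y
  have hgA : ∀ i : {i // i ∈ A}, ((Bᵀ * B) *ᵥ u) i = g i := fun i => by
    rw [hGram, mulVec_apply_eq_submatrix_mulVec A hu0,
      submatrix_one_add_mul_transpose_self _ Subtype.val_injective,
      ← show Yst = Y.submatrix (↑) id from hYst]
  have hg : g = g P • Pi.single P 1 := Pi.eq_smul_single_one_of_forall_ne fun i hi => by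
    rw [← hgA, ← col_dotProduct_mulVec]
    exact huo i i.2 fun h => hi (Subtype.ext h)
  have hnorm : (B *ᵥ u) ⬝ᵥ (B *ᵥ u) = g P := by
    rw [mulVec_dotProduct_mulVec_self, dotProduct_eq_dotProduct_subtype A hu0, funext hgA]
    nth_rw 1 [hg]
    simp [P, hup]
  have huA : uA = (1 + Yst * Ystᵀ)⁻¹ *ᵥ (g P • Pi.single P 1) := by
    have hunit : IsUnit (1 + Yst * Ystᵀ).det := by
      simpa using (isUnit_iff_isUnit_det _).mp (isUnit_one_add_transpose_mul_self Ystᵀ)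
    rw [← hg, mulVec_mulVec, nonsing_inv_mul _ hunit, one_mulVec]
  have heP : (fun i : {i // i ∈ A} => if i.1 = p then (1 : ℝ) else 0) = Pi.single P 1 := by
    funext i; simp [Pi.single_apply, P, Subtype.ext_iff]
  rw [dotProduct_eq_dotProduct_subtype A hu0, heP, hnorm, ← inv_one_add_mul_transpose_self,
    ← smul_eq_mul, ← dotProduct_smul, ← mulVec_smul, ← huA, dotProduct_comm]

/-- Inner product formula `⟨u, v⟩ = ‖Bu‖² · v[A]ᵀ (I - Y⋆ D Y⋆ᵀ) eₚ[A]`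
for any `v` with `vᵀ Y = 0`. -/
theorem gsw_inner_product_formula (n d : ℕ) (Y : Matrix (Fin n) (Fin d) ℝ)
    (B : Matrix (Fin n ⊕ Fin d) (Fin n) ℝ) (hB : B = Matrix.fromRows 1 Yᵀ)
    (A : Finset (Fin n)) (hA : A.Nonempty) (p : Fin n) (hp : p ∈ A)
    (Yst : Matrix {i // i ∈ A} (Fin d) ℝ) (hYst : Yst = Matrix.of fun i j => Y i.1 j)
    (D : Matrix (Fin d) (Fin d) ℝ) (hD : D = (1 + Ystᵀ * Yst)⁻¹)
    (u : Fin n → ℝ) (hu0 : ∀ i, i ∉ A → u i = 0) (hup : u p = 1)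
    (huo : ∀ i ∈ A, i ≠ p → (fun k => B k i) ⬝ᵥ (B *ᵥ u) = 0)
    (v : Fin n → ℝ) (hv : v ᵥ* Y = 0) :
    u ⬝ᵥ v = ((B *ᵥ u) ⬝ᵥ (B *ᵥ u)) *
      ((fun i : {i // i ∈ A} => v i.1) ⬝ᵥ
        (((1 : Matrix {i // i ∈ A} {i // i ∈ A} ℝ) - Yst * D * Ystᵀ) *ᵥ
          fun i : {i // i ∈ A} => if i.1 = p then (1 : ℝ) else 0)) :=
  gsw_inner_product_formula_general n d Y B hB A p hp Yst hYst D hD u hu0 hup huo v
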